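/- Let f : ℝ⁴ → ℝ be a smooth, everywhere positive function of (x, y, s, t), where y plays the role of t_3, s of t_{2m−1}, and t of t_{2m+1}. Set v = 2(log f)_x, u = v_x. Assume f satisfies the bilinear KdV equation in (x, y): (4 D_x D_y + D_x⁴) f·f = 0, and the unified bilinear hierarchy equation (D_x D_t + (1/6)·D_s D_x³ − (1/3)·D_y D_s) f·f = 0. Then u satisfies the recursion-form equation 4 u_t + u_{xxs} + 4 u·u_s + 2 u_x·v_s = 0; that is, 4 u_{t_{2m+1}} + L u_{t_{2m−1}} = 0 where L = ∂_x² + 4u + 2u_x ∂_x^{−1} is the KdV recursion operator and the antiderivative ∂_x^{−1}(u_s) is realized by v_s. -/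

import Mathlib

noncomputable section

/-- Partial derivative in the first variable `x` of a function on `ℝ⁴`. -/
def pX (f : ℝ × ℝ × ℝ × ℝ → ℝ) : ℝ × ℝ × ℝ × ℝ → ℝ :=
  fun p => deriv (fun x => f (x, p.2)) p.1

/-- Partial derivative in the second variable `y` (playing the role of `t₃`). -/
def pY (f : ℝ × ℝ × ℝ × ℝ → ℝ) : ℝ × ℝ × ℝ × ℝ → ℝ :=
  fun p => deriv (fun y => f (p.1, y, p.2.2)) p.2.1

/-- Partial derivative in the third variable `s` (playing the role of `t_{2m−1}`). -/
def pS (f : ℝ × ℝ × ℝ × ℝ → ℝ) : ℝ × ℝ × ℝ × ℝ → ℝ :=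
  fun p => deriv (fun s => f (p.1, p.2.1, s, p.2.2.2)) p.2.2.1

/-- Partial derivative in the fourth variable `t` (playing the role of `t_{2m+1}`). -/
def pT (f : ℝ × ℝ × ℝ × ℝ → ℝ) : ℝ × ℝ × ℝ × ℝ → ℝ :=
  fun p => deriv (fun t => f (p.1, p.2.1, p.2.2.1, t)) p.2.2.2

/-- Hirota bilinear operator `D_x D_y f·f = 2(f_{xy} f − f_x f_y)`. -/
def HDxDy (f : ℝ × ℝ × ℝ × ℝ → ℝ) : ℝ × ℝ × ℝ × ℝ → ℝ :=
  fun p => 2 * (pX (pY f) p * f p - pX f p * pY f p)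

/-- Hirota bilinear operator `D_x D_t f·f = 2(f_{xt} f − f_x f_t)`. -/
def HDxDt (f : ℝ × ℝ × ℝ × ℝ → ℝ) : ℝ × ℝ × ℝ × ℝ → ℝ :=
  fun p => 2 * (pX (pT f) p * f p - pX f p * pT f p)

/-- Hirota bilinear operator `D_y D_s f·f = 2(f_{ys} f − f_y f_s)`. -/
def HDyDs (f : ℝ × ℝ × ℝ × ℝ → ℝ) : ℝ × ℝ × ℝ × ℝ → ℝ :=
  fun p => 2 * (pY (pS f) p * f p - pY f p * pS f p)

/-- Hirota bilinear operator `D_x⁴ f·f = 2(f f_{xxxx} − 4 f_x f_{xxx} + 3 (f_{xx})²)`. -/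
def HDx4 (f : ℝ × ℝ × ℝ × ℝ → ℝ) : ℝ × ℝ × ℝ × ℝ → ℝ :=
  fun p => 2 * (f p * pX (pX (pX (pX f))) p - 4 * pX f p * pX (pX (pX f)) p
      + 3 * (pX (pX f) p) ^ 2)

/-- Hirota bilinear operator
`D_s D_x³ f·f = 2(f_{xxxs} f − f_{xxx} f_s − 3 f_{xxs} f_x + 3 f_{xx} f_{xs})`. -/
def HDsDx3 (f : ℝ × ℝ × ℝ × ℝ → ℝ) : ℝ × ℝ × ℝ × ℝ → ℝ :=
  fun p => 2 * (pX (pX (pX (pS f))) p * f p - pX (pX (pX f)) p * pS f p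
      - 3 * pX (pX (pS f)) p * pX f p + 3 * pX (pX f) p * pX (pS f) p)

/- ### Auxiliary infrastructure -/

abbrev E4' := ℝ × ℝ × ℝ × ℝ

/-- directional derivative -/
def DD (w : E4') (h : E4' → ℝ) : E4' → ℝ := fun p => fderiv ℝ h p w

abbrev wx : E4' := (1,0,0,0)
abbrev wy : E4' := (0,1,0,0)
abbrev ws : E4' := (0,0,1,0)
abbrev wt : E4' := (0,0,0,1)

lemma cdtop {F : Type*} [NormedAddCommGroup F] [NormedSpace ℝ F] {a : E4' → F}
    (ha : ContDiff ℝ (⊤:ℕ∞) a) : Differentiable ℝ a :=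
  ha.differentiable (by simp)

@[fun_prop]
lemma DD_contDiff {h : E4' → ℝ} (hh : ContDiff ℝ (⊤ : ℕ∞) h) (w : E4') :
    ContDiff ℝ (⊤ : ℕ∞) (DD w h) :=
  (hh.fderiv_right (le_refl _)).clm_apply contDiff_const

@[fun_prop]
lemma DD_differentiable {h : E4' → ℝ} (hh : ContDiff ℝ (⊤ : ℕ∞) h) (w : E4') :
    Differentiable ℝ (DD w h) :=
  cdtop (DD_contDiff hh w)

lemma DD_add {a b : E4' → ℝ} (ha : ContDiff ℝ (⊤:ℕ∞) a) (hb : ContDiff ℝ (⊤:ℕ∞) b) (w : E4') :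
    DD w (fun p => a p + b p) = fun p => DD w a p + DD w b p := by
  funext p
  simp only [DD, fderiv_fun_add (cdtop ha p) (cdtop hb p)]
  rfl

lemma DD_sub {a b : E4' → ℝ} (ha : ContDiff ℝ (⊤:ℕ∞) a) (hb : ContDiff ℝ (⊤:ℕ∞) b) (w : E4') :
    DD w (fun p => a p - b p) = fun p => DD w a p - DD w b p := by
  funext p
  simp only [DD, fderiv_fun_sub (cdtop ha p) (cdtop hb p)]
  rfl

lemma DD_mul {a b : E4' → ℝ} (ha : ContDiff ℝ (⊤:ℕ∞) a) (hb : ContDiff ℝ (⊤:ℕ∞) b) (w : E4') :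
    DD w (fun p => a p * b p) = fun p => DD w a p * b p + a p * DD w b p := by
  funext p
  simp only [DD, fderiv_fun_mul (cdtop ha p) (cdtop hb p)]
  simp only [ContinuousLinearMap.add_apply, ContinuousLinearMap.smul_apply, smul_eq_mul]
  ring

lemma DD_cmul {a : E4' → ℝ} (ha : ContDiff ℝ (⊤:ℕ∞) a) (c : ℝ) (w : E4') :
    DD w (fun p => c * a p) = fun p => c * DD w a p := by
  funext p
  simp only [DD, fderiv_const_mul (cdtop ha p) c]
  rfl

lemma DD_zero (w : E4') : DD w (fun _ => (0:ℝ)) = fun _ => 0 := by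
  funext p; simp [DD]

lemma DD_const (c : ℝ) (w : E4') : DD w (fun _ => c) = fun _ => 0 := by
  funext p; simp [DD]

lemma DD_symm {a : E4' → ℝ} (ha : ContDiff ℝ (⊤:ℕ∞) a) (w w' : E4') :
    DD w (DD w' a) = DD w' (DD w a) := by
  funext p
  have hd : Differentiable ℝ (fderiv ℝ a) := cdtop (ha.fderiv_right (le_refl _))
  have key : ∀ z z' : E4', DD z (DD z' a) p = fderiv ℝ (fderiv ℝ a) p z z' := by
    intro z z'
    have h1 : HasFDerivAt (fun q => fderiv ℝ a q z')
        ((ContinuousLinearMap.apply ℝ ℝ z').comp (fderiv ℝ (fderiv ℝ a) p)) p :=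
      (ContinuousLinearMap.apply ℝ ℝ z').hasFDerivAt.comp p (hd p).hasFDerivAt
    show fderiv ℝ (fun q => fderiv ℝ a q z') p z = _
    rw [h1.fderiv]
    rfl
  rw [key, key]
  exact second_derivative_symmetric
    (fun y => (cdtop ha y).hasFDerivAt) (hd p).hasFDerivAt w w'

lemma pX_eq {h : E4' → ℝ} (hh : Differentiable ℝ h) : pX h = DD wx h := by
  funext p
  have h1 : HasFDerivAt (fun x : ℝ => ((x, p.2) : E4'))
      ((ContinuousLinearMap.id ℝ ℝ).prod 0) p.1 :=
    HasFDerivAt.prodMk (hasFDerivAt_id _) (hasFDerivAt_const _ _)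
  have h2 : HasDerivAt (fun x : ℝ => h (x, p.2)) (fderiv ℝ h p ((1:ℝ),(0:ℝ),(0:ℝ),(0:ℝ))) p.1 :=
    ((hh p).hasFDerivAt.comp p.1 h1).hasDerivAt
  exact h2.deriv

lemma pY_eq {h : E4' → ℝ} (hh : Differentiable ℝ h) : pY h = DD wy h := by
  funext p
  have h1 : HasFDerivAt (fun y : ℝ => ((p.1, y, p.2.2) : E4'))
      ((0 : ℝ →L[ℝ] ℝ).prod ((ContinuousLinearMap.id ℝ ℝ).prod 0)) p.2.1 :=
    HasFDerivAt.prodMk (hasFDerivAt_const _ _) (HasFDerivAt.prodMk (hasFDerivAt_id _) (hasFDerivAt_const _ _))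
  have h2 : HasDerivAt (fun y : ℝ => h (p.1, y, p.2.2))
      (fderiv ℝ h p ((0:ℝ),(1:ℝ),(0:ℝ),(0:ℝ))) p.2.1 :=
    ((hh p).hasFDerivAt.comp p.2.1 h1).hasDerivAt
  exact h2.deriv

lemma pS_eq {h : E4' → ℝ} (hh : Differentiable ℝ h) : pS h = DD ws h := by
  funext p
  have h1 : HasFDerivAt (fun s : ℝ => ((p.1, p.2.1, s, p.2.2.2) : E4'))
      ((0 : ℝ →L[ℝ] ℝ).prod ((0 : ℝ →L[ℝ] ℝ).prod ((ContinuousLinearMap.id ℝ ℝ).prod 0))) p.2.2.1 :=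
    HasFDerivAt.prodMk (hasFDerivAt_const _ _) (HasFDerivAt.prodMk (hasFDerivAt_const _ _)
      (HasFDerivAt.prodMk (hasFDerivAt_id _) (hasFDerivAt_const _ _)))
  have h2 : HasDerivAt (fun s : ℝ => h (p.1, p.2.1, s, p.2.2.2))
      (fderiv ℝ h p ((0:ℝ),(0:ℝ),(1:ℝ),(0:ℝ))) p.2.2.1 :=
    ((hh p).hasFDerivAt.comp p.2.2.1 h1).hasDerivAt
  exact h2.deriv

lemma pT_eq {h : E4' → ℝ} (hh : Differentiable ℝ h) : pT h = DD wt h := by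
  funext p
  have h1 : HasFDerivAt (fun t : ℝ => ((p.1, p.2.1, p.2.2.1, t) : E4'))
      ((0 : ℝ →L[ℝ] ℝ).prod ((0 : ℝ →L[ℝ] ℝ).prod
        ((0 : ℝ →L[ℝ] ℝ).prod (ContinuousLinearMap.id ℝ ℝ)))) p.2.2.2 :=
    HasFDerivAt.prodMk (hasFDerivAt_const _ _) (HasFDerivAt.prodMk (hasFDerivAt_const _ _)
      (HasFDerivAt.prodMk (hasFDerivAt_const _ _) (hasFDerivAt_id _)))
  have h2 : HasDerivAt (fun t : ℝ => h (p.1, p.2.1, p.2.2.1, t))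
      (fderiv ℝ h p ((0:ℝ),(0:ℝ),(0:ℝ),(1:ℝ))) p.2.2.2 :=
    ((hh p).hasFDerivAt.comp p.2.2.2 h1).hasDerivAt
  exact h2.deriv

theorem stmt_7
    (f : ℝ × ℝ × ℝ × ℝ → ℝ) (hf : ContDiff ℝ (⊤ : ℕ∞) f) (hfpos : ∀ p, 0 < f p)
    (v u : ℝ × ℝ × ℝ × ℝ → ℝ)
    (hv : v = pX (fun p => 2 * Real.log (f p)))
    (hu : u = pX v)
    (hbil1 : ∀ p, 4 * HDxDy f p + HDx4 f p = 0)
    (hbil2 : ∀ p, HDxDt f p + (1 / 6) * HDsDx3 f p - (1 / 3) * HDyDs f p = 0) :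
    ∀ p, 4 * pT u p + pX (pX (pS u)) p + 4 * u p * pS u p + 2 * pX u p * pS v p = 0 := by
  have hftop : ContDiff ℝ (⊤:ℕ∞) f := hf.of_le (by simp)
  have hfd : Differentiable ℝ f := cdtop hftop
  set g : E4' → ℝ := fun q => Real.log (f q) with hgdef
  have hg : ContDiff ℝ (⊤:ℕ∞) g := hftop.log (fun q => (hfpos q).ne')
  -- first derivatives of f in terms of g = log f
  have hDf : ∀ w : E4', DD w f = fun q => DD w g q * f q := by
    intro w; funext q
    have hl : HasFDerivAt g ((f q)⁻¹ • fderiv ℝ f q) q :=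
      (hfd q).hasFDerivAt.log (hfpos q).ne'
    have h2 : DD w g q = (f q)⁻¹ * DD w f q := by
      show fderiv ℝ g q w = _
      rw [hl.fderiv]; rfl
    rw [h2, mul_comm ((f q)⁻¹) (DD w f q), mul_assoc, inv_mul_cancel₀ (hfpos q).ne', mul_one]
  have hL : (fun q : ℝ × ℝ × ℝ × ℝ => 2 * Real.log (f q)) = fun q => 2 * g q := rfl
  clear_value g
  have hgd : Differentiable ℝ g := cdtop hg
  -- convert the bilinear hypotheses to DD language and expand
  simp only [HDxDy, HDx4, HDxDt, HDyDs, HDsDx3] at hbil1 hbil2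
  simp (disch := fun_prop) only [pX_eq, pY_eq, pS_eq, pT_eq] at hbil1 hbil2
  simp (disch := fun_prop) only [hDf, DD_add, DD_mul, DD_cmul] at hbil1 hbil2
  -- the KdV equation in terms of g
  have hA : ∀ q, 4 * DD wx (DD wy g) q + DD wx (DD wx (DD wx (DD wx g))) q
      + 6 * (DD wx (DD wx g) q * DD wx (DD wx g) q) = 0 := by
    intro q
    have h := hbil1 q
    have h2 : (2 * f q ^ 2) * (4 * DD wx (DD wy g) q + DD wx (DD wx (DD wx (DD wx g))) q
        + 6 * (DD wx (DD wx g) q * DD wx (DD wx g) q)) = 0 := by linear_combination h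
    exact (mul_eq_zero.mp h2).resolve_left
      (mul_ne_zero two_ne_zero (pow_ne_zero 2 (hfpos q).ne'))
  have hB : ∀ q, 6 * DD wx (DD wt g) q + DD wx (DD wx (DD wx (DD ws g))) q
      + 6 * (DD wx (DD wx g) q * DD wx (DD ws g) q) - 2 * DD wy (DD ws g) q = 0 := by
    intro q
    have h := hbil2 q
    have h2 : (f q ^ 2 / 3) * (6 * DD wx (DD wt g) q + DD wx (DD wx (DD wx (DD ws g))) q
        + 6 * (DD wx (DD wx g) q * DD wx (DD ws g) q) - 2 * DD wy (DD ws g) q) = 0 := by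
      linear_combination h
    exact (mul_eq_zero.mp h2).resolve_left
      (div_ne_zero (pow_ne_zero 2 (hfpos q).ne') three_ne_zero)
  -- commutation lemmas
  have c1 : DD ws (DD wx (DD wy g)) = DD wx (DD wy (DD ws g)) := by
    conv_lhs => rw [DD_symm (DD_contDiff hg wy), DD_symm hg]
  have c2 : DD ws (DD wx (DD wx (DD wx (DD wx g))))
      = DD wx (DD wx (DD wx (DD wx (DD ws g)))) := by
    conv_lhs => rw [DD_symm (DD_contDiff (DD_contDiff (DD_contDiff hg wx) wx) wx),
      DD_symm (DD_contDiff (DD_contDiff hg wx) wx),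
      DD_symm (DD_contDiff hg wx), DD_symm hg]
  have c3 : DD ws (DD wx (DD wx g)) = DD wx (DD wx (DD ws g)) := by
    conv_lhs => rw [DD_symm (DD_contDiff hg wx), DD_symm hg]
  have c4 : DD wt (DD wx (DD wx g)) = DD wx (DD wx (DD wt g)) := by
    conv_lhs => rw [DD_symm (DD_contDiff hg wx), DD_symm hg]
  have c5 : DD ws (DD wx g) = DD wx (DD ws g) := DD_symm hg ws wx
  -- differentiate the KdV equation in the s-direction
  have hAfun : (fun q => 4 * DD wx (DD wy g) q + DD wx (DD wx (DD wx (DD wx g))) q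
      + 6 * (DD wx (DD wx g) q * DD wx (DD wx g) q)) = fun _ => (0:ℝ) := funext hA
  have hAs : ∀ q, DD ws (fun q => 4 * DD wx (DD wy g) q + DD wx (DD wx (DD wx (DD wx g))) q
      + 6 * (DD wx (DD wx g) q * DD wx (DD wx g) q)) q = 0 := by
    rw [hAfun, DD_zero]
    intro q; rfl
  simp (disch := fun_prop) only [DD_add, DD_mul, DD_cmul, DD_const] at hAs
  simp only [zero_mul, mul_zero, add_zero, zero_add] at hAs
  simp only [c1, c2, c3] at hAs
  -- differentiate the hierarchy equation in the x-direction
  have hBfun : (fun q => 6 * DD wx (DD wt g) q + DD wx (DD wx (DD wx (DD ws g))) q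
      + 6 * (DD wx (DD wx g) q * DD wx (DD ws g) q) - 2 * DD wy (DD ws g) q)
      = fun _ => (0:ℝ) := funext hB
  have hBx : ∀ q, DD wx (fun q => 6 * DD wx (DD wt g) q + DD wx (DD wx (DD wx (DD ws g))) q
      + 6 * (DD wx (DD wx g) q * DD wx (DD ws g) q) - 2 * DD wy (DD ws g) q) q = 0 := by
    rw [hBfun, DD_zero]
    intro q; rfl
  simp (disch := fun_prop) only [DD_sub, DD_add, DD_mul, DD_cmul, DD_const] at hBx
  simp only [zero_mul, mul_zero, add_zero, zero_add] at hBx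
  -- rewrite the goal
  subst hu hv
  rw [hL]
  simp (disch := fun_prop) only [pX_eq, pS_eq, pT_eq]
  simp (disch := fun_prop) only [DD_cmul]
  simp only [c3, c4, c5]
  intro p
  linear_combination (4/3) * hBx p + (2/3) * hAs p
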